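/- arXiv:0802.3414 — 5 statements merged into one kernel-verified Lean document; each statement's English description precedes it below -/
import Mathlib

section
/- Let V be a finite connected set of unit cells in the d-dimensional integer grid (d ≥ 2), connected via face-adjacency, and let B denote the set of cells of V adjacent (via a face) to the unique infinite face-connected component of the complement of V. Suppose x ∈ B is an articulation cell of V, and x is face-adjacent to a cell y ∈ V such that the connected component of V \ {x} containing y is disjoint from B. Then the face of x opposite the face shared with y lies on the outer boundary of V, i.e., the cell of the grid adjacent to x opposite y belongs to the infinite component of the complement of V. -/
/-- The grid graph on `ℤ^d`: cells are face-adjacent iff their centers are at distance 1. -/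
def gridGraph (d : ℕ) : SimpleGraph (Fin d → ℤ) where
  Adj a b := (∑ i, |a i - b i|) = 1
  symm := by
    constructor
    intro a b h
    simpa [abs_sub_comm] using h
  loopless := by
    constructor
    intro a h
    simp at h

/-- Reachability within a set `S` of cells via face-adjacency. -/
def ReachIn (d : ℕ) (S : Set (Fin d → ℤ)) (a b : Fin d → ℤ) : Prop :=
  Relation.ReflTransGen (fun x y => x ∈ S ∧ y ∈ S ∧ (gridGraph d).Adj x y) a b

/-- A set of cells is (face-)connected. -/
def IsConn (d : ℕ) (S : Set (Fin d → ℤ)) : Prop :=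
  S.Nonempty ∧ ∀ a ∈ S, ∀ b ∈ S, ReachIn d S a b

/-- The outer boundary modules of `V`: cells of `V` face-adjacent to a cell of an
infinite face-connected component of the complement of `V`. -/
def Bout (d : ℕ) (V : Set (Fin d → ℤ)) : Set (Fin d → ℤ) :=
  {v | v ∈ V ∧ ∃ c, c ∉ V ∧ (gridGraph d).Adj v c ∧
    Set.Infinite {b | ReachIn d Vᶜ c b}}

/-!
Let `c` be the neighbour of `x` in the infinite component of the complement. It is not `y`,
since `y ∈ V`. If it is neither `y` nor the cell opposite `y`, then `c - x` and `y - x` are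
orthogonal unit steps and the fourth corner `u = y + c - x` of their square is adjacent to both
`y` and `c`. If `u ∈ V`, then `u` lies in the component of `y` in `V \ {x}` and touches `c`;
otherwise `u` lies in the infinite component and touches `y`. Either way that component of
`V \ {x}` meets the outer boundary.
-/

lemma gridGraph_adj_iff {d : ℕ} {a b : Fin d → ℤ} :
    (gridGraph d).Adj a b ↔ ∃ i, |a i - b i| = 1 ∧ ∀ j, j ≠ i → a j = b j := by
  constructor
  · intro h
    have hsum : (∑ i, |a i - b i|) = 1 := h
    obtain ⟨i, hi⟩ : ∃ i, |a i - b i| ≠ 0 := by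
      by_contra! h0
      simp [h0] at hsum
    have hrest : (∑ k ∈ Finset.univ.erase i, |a k - b k|) + |a i - b i| = 1 := by
      rwa [Finset.sum_erase_add _ _ (Finset.mem_univ i)]
    have hrest0 : (∑ k ∈ Finset.univ.erase i, |a k - b k|) = 0 := by
      have := Finset.sum_nonneg fun k (_ : k ∈ Finset.univ.erase i) => abs_nonneg (a k - b k)
      have := Int.one_le_abs (abs_ne_zero.mp hi)
      omega
    refine ⟨i, by omega, fun j hj => ?_⟩
    have := (Finset.sum_eq_zero_iff_of_nonneg fun k _ => abs_nonneg (a k - b k)).mp hrest0 j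
      (Finset.mem_erase.mpr ⟨hj, Finset.mem_univ j⟩)
    exact sub_eq_zero.mp (abs_eq_zero.mp this)
  · rintro ⟨i, hi, hrest⟩
    show (∑ j, |a j - b j|) = 1
    rw [Finset.sum_eq_single i (fun j _ hj => by simp [hrest j hj]) (by simp)]
    exact hi

lemma gridGraph_exists_common_neighbor {d : ℕ} {x y c : Fin d → ℤ}
    (hxy : (gridGraph d).Adj x y) (hxc : (gridGraph d).Adj x c) (hcy : c ≠ y)
    (hc : c ≠ fun k => 2 * x k - y k) :
    ∃ u, u ≠ x ∧ (gridGraph d).Adj y u ∧ (gridGraph d).Adj u c := by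
  obtain ⟨i, hyi, hyo⟩ := gridGraph_adj_iff.mp hxy
  obtain ⟨j, hcj, hco⟩ := gridGraph_adj_iff.mp hxc
  by_cases hji : j = i
  · subst hji
    exfalso
    have hyi' := (abs_eq (zero_le_one' ℤ)).mp hyi
    have hcj' := (abs_eq (zero_le_one' ℤ)).mp hcj
    have hcj_cases : c j = y j ∨ c j = 2 * x j - y j := by omega
    rcases hcj_cases with hcj_eq | hcj_eq
    · refine hcy (funext fun k => ?_)
      by_cases hk : k = j
      · rwa [hk]
      · rw [← hco k hk, hyo k hk]
    · refine hc (funext fun k => ?_)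
      by_cases hk : k = j
      · rwa [hk]
      · rw [← hco k hk, ← hyo k hk]
        ring
  · refine ⟨Function.update c i (y i), fun h => ?_, ?_, ?_⟩
    · have := congrFun h i
      simp only [Function.update_self] at this
      simp [this] at hyi
    · refine gridGraph_adj_iff.mpr ⟨j, ?_, fun k hk => ?_⟩
      · rw [Function.update_of_ne hji, ← hyo j hji]
        exact hcj
      · by_cases hki : k = i
        · subst hki; simp
        · rw [Function.update_of_ne hki, ← hyo k hki, hco k hk]
    · refine gridGraph_adj_iff.mpr ⟨i, ?_, fun k hk => Function.update_of_ne hk _ _⟩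
      rw [Function.update_self, ← hco i (Ne.symm hji), abs_sub_comm]
      exact hyi

lemma infinite_reachIn_of_adj {d : ℕ} {S : Set (Fin d → ℤ)} {u c : Fin d → ℤ}
    (hu : u ∈ S) (hc : c ∈ S) (huc : (gridGraph d).Adj u c)
    (hinf : {b | ReachIn d S c b}.Infinite) : {b | ReachIn d S u b}.Infinite :=
  hinf.mono fun _ hb => Relation.ReflTransGen.head ⟨hu, hc, huc⟩ hb

theorem stmt3_general (d : ℕ) (V : Set (Fin d → ℤ))
    (x : Fin d → ℤ) (hx : x ∈ Bout d V)
    (y : Fin d → ℤ) (hy : y ∈ V) (hadj : (gridGraph d).Adj x y)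
    (hdisj : ∀ b, ReachIn d (V \ {x}) y b → b ∉ Bout d V) :
    (fun i => 2 * x i - y i) ∉ V ∧
      Set.Infinite {b | ReachIn d Vᶜ (fun i => 2 * x i - y i) b} := by
  obtain ⟨-, c, hcV, hxc, hinf⟩ := hx
  by_cases hc : c = fun k => 2 * x k - y k
  · exact hc ▸ ⟨hcV, hinf⟩
  exfalso
  have hcy : c ≠ y := fun h => hcV (h ▸ hy)
  obtain ⟨u, hux, hyu, huc⟩ := gridGraph_exists_common_neighbor hadj hxc hcy hc
  by_cases huV : u ∈ V
  · have hyu_reach : ReachIn d (V \ {x}) y u :=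
      Relation.ReflTransGen.single ⟨⟨hy, hadj.ne.symm⟩, ⟨huV, hux⟩, hyu⟩
    exact hdisj u hyu_reach ⟨huV, c, hcV, huc, hinf⟩
  · exact hdisj y Relation.ReflTransGen.refl
      ⟨hy, u, huV, hyu, infinite_reachIn_of_adj huV hcV huc hinf⟩

theorem stmt3 (d : ℕ) (hd : 2 ≤ d) (V : Set (Fin d → ℤ)) (hfin : V.Finite)
    (hconn : IsConn d V) (x : Fin d → ℤ) (hx : x ∈ Bout d V)
    (hart : ¬ IsConn d (V \ {x}))
    (y : Fin d → ℤ) (hy : y ∈ V) (hadj : (gridGraph d).Adj x y)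
    (hdisj : ∀ b, ReachIn d (V \ {x}) y b → b ∉ Bout d V) :
    (fun i => 2 * x i - y i) ∉ V ∧
      Set.Infinite {b | ReachIn d Vᶜ (fun i => 2 * x i - y i) b} :=
  stmt3_general d V x hx y hy hadj hdisj
end

section
/- Let V be a finite connected set of cells in Z^d (d ≥ 2, face-adjacency), with outer boundary B = B_out(V). Suppose x ∈ B is an articulation cell of V and x is face-adjacent to y ∈ V whose component in V \ {x} is disjoint from B. Then every cell w ∈ V with w ≠ y that is face-adjacent to x lies in a component of V \ {x} that meets B. -/
/-!
Let `c ∉ V` be a neighbour of `x` in the infinite component of the complement. For every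
neighbour `v ∈ V` of `x` other than the one opposite to `c`, the cells `x, v, v + (c - x), c`
form a unit square: if `v + (c - x) ∈ V` it is an outer boundary cell next to `v`, otherwise
`v` itself is one. Hence only the neighbour opposite to `c` can fail to reach `B_out(V)`
in `V \ {x}`; by hypothesis that neighbour is `y`.
-/

lemma gridGraph_adj_of_sub_eq {d : ℕ} {a b a' b' : Fin d → ℤ} (h : a - b = a' - b')
    (hadj : (gridGraph d).Adj a' b') : (gridGraph d).Adj a b := by
  change (∑ i, |a' i - b' i|) = 1 at hadj
  change (∑ i, |a i - b i|) = 1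
  simpa only [← Pi.sub_apply, h] using hadj

lemma ReachIn.head {d : ℕ} {S : Set (Fin d → ℤ)} {a b c : Fin d → ℤ}
    (ha : a ∈ S) (hb : b ∈ S) (hab : (gridGraph d).Adj a b) (hbc : ReachIn d S b c) : ReachIn d S a c :=
  Relation.ReflTransGen.head ⟨ha, hb, hab⟩ hbc

lemma exists_mem_bout_reachIn_of_adj {d : ℕ} {V : Set (Fin d → ℤ)} {x c v : Fin d → ℤ}
    (hcV : c ∉ V) (hxc : (gridGraph d).Adj x c) (hinf : {b | ReachIn d Vᶜ c b}.Infinite)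
    (hv : v ∈ V) (hxv : (gridGraph d).Adj x v) (hopp : v - x ≠ x - c) :
    ∃ b ∈ Bout d V, ReachIn d (V \ {x}) v b := by
  set z := v + (c - x) with hz
  have hvz : (gridGraph d).Adj v z := gridGraph_adj_of_sub_eq (by linear_combination -hz) hxc
  have hzc : (gridGraph d).Adj z c := gridGraph_adj_of_sub_eq (by linear_combination hz) hxv.symm
  have hvx : v ∉ ({x} : Set _) := hxv.ne.symm
  by_cases hzV : z ∈ V
  · have hzx : z ∉ ({x} : Set _) := fun h =>
      hopp (by linear_combination Set.mem_singleton_iff.mp h - hz)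
    exact ⟨z, ⟨hzV, c, hcV, hzc, hinf⟩, .single ⟨⟨hv, hvx⟩, ⟨hzV, hzx⟩, hvz⟩⟩
  · have hreach : {b | ReachIn d Vᶜ c b} ⊆ {b | ReachIn d Vᶜ z b} :=
      fun _ hb => ReachIn.head hzV hcV hzc hb
    exact ⟨v, ⟨hv, z, hzV, hvz, hinf.mono hreach⟩, .refl⟩

theorem stmt4_general (d : ℕ) (V : Set (Fin d → ℤ))
    (x : Fin d → ℤ) (hx : x ∈ Bout d V)
    (y : Fin d → ℤ) (hy : y ∈ V) (hadj : (gridGraph d).Adj x y)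
    (hdisj : ∀ b, ReachIn d (V \ {x}) y b → b ∉ Bout d V) :
    ∀ w ∈ V, w ≠ y → (gridGraph d).Adj x w →
      ∃ b ∈ Bout d V, ReachIn d (V \ {x}) w b := by
  obtain ⟨-, c, hcV, hxc, hinf⟩ := hx
  intro w hw hwy hxw
  have hy_opp : y - x = x - c := by
    by_contra hopp
    obtain ⟨b, hb, hyb⟩ := exists_mem_bout_reachIn_of_adj hcV hxc hinf hy hadj hopp
    exact hdisj b hyb hb
  refine exists_mem_bout_reachIn_of_adj hcV hxc hinf hw hxw fun hw_opp => hwy ?_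
  exact sub_left_injective (hw_opp.trans hy_opp.symm)

theorem stmt4 (d : ℕ) (hd : 2 ≤ d) (V : Set (Fin d → ℤ)) (hfin : V.Finite)
    (hconn : IsConn d V) (x : Fin d → ℤ) (hx : x ∈ Bout d V)
    (hart : ¬ IsConn d (V \ {x}))
    (y : Fin d → ℤ) (hy : y ∈ V) (hadj : (gridGraph d).Adj x y)
    (hdisj : ∀ b, ReachIn d (V \ {x}) y b → b ∉ Bout d V) :
    ∀ w ∈ V, w ≠ y → (gridGraph d).Adj x w →
      ∃ b ∈ Bout d V, ReachIn d (V \ {x}) w b :=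
  stmt4_general d V x hx y hy hadj hdisj
end

section
/- Perform a depth-first search of a finite connected graph G from a root s, assigning each vertex its finishing time (post-order number). If x is an articulation vertex of G and t is a vertex in a component of G \ {x} not containing s, then the finishing time of t is strictly less than the finishing time of x. -/
/-- Reachability in `G` with vertex `x` deleted. -/
def ReachAvoid {V : Type*} (G : SimpleGraph V) (x a b : V) : Prop :=
  Relation.ReflTransGen (fun u v => u ≠ x ∧ v ≠ x ∧ G.Adj u v) a b

/-- `u` is an ancestor of `v` in the tree `T` rooted at `s`: `u` lies on the unique
path from `s` to `v`. -/
def Ancestor {V : Type*} (T : SimpleGraph V) (s u v : V) : Prop :=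
  ∀ p : T.Walk s v, p.IsPath → u ∈ p.support

lemma walk_reachAvoid {V : Type*} (G T : SimpleGraph V) (hle : T ≤ G) (x : V) :
    ∀ {a b : V} (p : T.Walk a b), x ∉ p.support → ReachAvoid G x a b := by
  intro a b p
  induction p with
  | nil => intro _; exact Relation.ReflTransGen.refl
  | @cons u v w h q ih =>
    intro hx
    rw [SimpleGraph.Walk.support_cons, List.mem_cons] at hx
    push_neg at hx
    refine Relation.ReflTransGen.head ⟨Ne.symm hx.1, ?_, hle h⟩ (ih hx.2)
    intro hv
    exact hx.2 (hv ▸ q.start_mem_support)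

/-- DFS from `s`: if `x` is an articulation vertex of `G` and `t` lies in a component
of `G \ {x}` not containing `s`, then the DFS finishing time of `t` is strictly less
than that of `x`.  A DFS run is modelled by a Trémaux (DFS) spanning tree `T` of `G`
rooted at `s` (every edge of `G` joins an ancestor-descendant pair), together with
injective finishing times `f` satisfying the post-order property that every proper
descendant finishes before its ancestor. -/
theorem stmt9 {V : Type*} [Fintype V] (G T : SimpleGraph V) (hconn : G.Connected)
    (hle : T ≤ G) (htree : T.IsTree) (s : V)
    (htremaux : ∀ a b : V, G.Adj a b → Ancestor T s a b ∨ Ancestor T s b a)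
    (f : V → ℕ) (hfinj : Function.Injective f)
    (hpost : ∀ u v : V, Ancestor T s u v → u ≠ v → f v < f u)
    (x t : V) (hart : ∃ a b : V, a ≠ x ∧ b ≠ x ∧ ¬ ReachAvoid G x a b)
    (ht : t ≠ x) (hcomp : ¬ ReachAvoid G x s t) :
    f t < f x := by
  obtain ⟨p, hp, hu⟩ := htree.existsUnique_path s t
  have hxp : x ∈ p.support := by
    by_contra hxp
    exact hcomp (walk_reachAvoid G T hle x p hxp)
  have hanc : Ancestor T s x t := by
    intro q hq
    rwa [hu q hq]
  exact hpost x t hanc (Ne.symm ht)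
end

section
/- Let G be a finite connected graph, s a vertex, and consider any depth-first search tree T of G rooted at s. If x is a vertex such that the components of G \ {x} not containing s are exactly the vertex sets I_1, ..., I_k, then for each i, the subtree of T induced by I_i together with the DFS finishing times restricted to I_i constitutes a valid depth-first search tree of the induced subgraph on I_i rooted at the neighbor of x in I_i that is the T-child of x. -/
open SimpleGraph Walk

section

variable {V : Type*} {G H T : SimpleGraph V} {s x a b r u v : V}

theorem ReachAvoid.symm (h : ReachAvoid G x a b) : ReachAvoid G x b a := by
  induction h with
  | refl => exact .refl
  | tail _ hstep ih => exact .head ⟨hstep.2.1, hstep.1, hstep.2.2.symm⟩ ih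

theorem ReachAvoid.trans (hab : ReachAvoid G x a b) (hbc : ReachAvoid G x b u) :
    ReachAvoid G x a u :=
  Relation.ReflTransGen.trans hab hbc

theorem ReachAvoid.mono (hGH : G ≤ H) (h : ReachAvoid G x a b) : ReachAvoid H x a b :=
  Relation.ReflTransGen.mono (fun _ _ h => ⟨h.1, h.2.1, hGH h.2.2⟩) _ _ h

theorem ReachAvoid.ne (hax : a ≠ x) (h : ReachAvoid G x a b) : b ≠ x := by
  induction h with
  | refl => exact hax
  | tail _ hstep => exact hstep.2.1

theorem reachAvoid_of_walk (p : G.Walk a b) (hx : x ∉ p.support) : ReachAvoid G x a b := by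
  induction p with
  | nil => exact .refl
  | cons h p ih =>
    rw [support_cons, List.mem_cons, not_or] at hx
    exact .head ⟨Ne.symm hx.1, fun hc => hx.2 (hc ▸ p.start_mem_support), h⟩ (ih hx.2)

theorem ReachAvoid.exists_walk (hax : a ≠ x) (h : ReachAvoid G x a b) :
    ∃ p : G.Walk a b, x ∉ p.support := by
  induction h with
  | refl => exact ⟨nil, by simpa using hax.symm⟩
  | tail _ hstep ih =>
    obtain ⟨p, hp⟩ := ih
    exact ⟨p.concat hstep.2.2, by simpa [support_concat] using ⟨hp, hstep.2.1.symm⟩⟩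

theorem ReachAvoid.reachable_induce {I : Set V} (hI : ∀ v, ReachAvoid G x a v → v ∈ I)
    (h : ReachAvoid G x a b) : (G.induce I).Reachable ⟨a, hI a .refl⟩ ⟨b, hI b h⟩ := by
  induction h with
  | refl => rfl
  | tail _ hstep ih => exact ih.trans (Adj.reachable (by simpa using hstep.2.2))

theorem ancestor_root (u v : V) : Ancestor T u u v :=
  fun p _ => p.start_mem_support

theorem ancestor_self (s v : V) : Ancestor T s v v :=
  fun p _ => p.end_mem_support

theorem ancestor_iff_mem_support (hT : T.IsAcyclic) {p : T.Walk s v} (hp : p.IsPath) :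
    Ancestor T s u v ↔ u ∈ p.support :=
  ⟨fun h => h p hp, fun hu q hq => by
    rwa [show q = p from congrArg Subtype.val ((hT.subsingleton_path s v).elim ⟨q, hq⟩ ⟨p, hp⟩)]⟩

theorem ancestor_of_reachAvoid (hTG : T ≤ G) (hs : ¬ ReachAvoid G x s a)
    (hv : ReachAvoid G x a v) : Ancestor T s x v := by
  intro p _
  by_contra hx
  exact hs (((reachAvoid_of_walk p hx).mono hTG).trans hv.symm)

theorem Ancestor.antisymm (hsv : T.Reachable s v) (huv : Ancestor T s u v)
    (hvu : Ancestor T s v u) : u = v := by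
  classical
  obtain ⟨p, hp⟩ := hsv.exists_isPath
  have hu := huv p hp
  by_contra hne
  refine (p.take_spec hu ▸ hp).ne_of_mem_support_of_append (Ne.symm hne)
    (hvu _ (hp.takeUntil hu)) (p.dropUntil u hu).end_mem_support rfl

theorem ancestor_iff_of_ancestor (hT : T.IsAcyclic) (hsv : T.Reachable s v)
    (hrv : Ancestor T s r v) : Ancestor T s u v ↔ Ancestor T s u r ∨ Ancestor T r u v := by
  classical
  obtain ⟨p, hp⟩ := hsv.exists_isPath
  have hr := hrv p hp
  rw [ancestor_iff_mem_support hT hp, ancestor_iff_mem_support hT (hp.takeUntil hr),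
    ancestor_iff_mem_support hT (hp.dropUntil hr), ← mem_support_append_iff, take_spec]

theorem Ancestor.eq_or_ancestor_of_adj (hur : Ancestor T s u r) (hT : T.IsAcyclic)
    (hsr : T.Reachable s r) (hxr : T.Adj x r) (hx : Ancestor T s x r) :
    u = r ∨ Ancestor T s u x := by
  rcases (ancestor_iff_of_ancestor hT hsr hx).1 hur with h | h
  · exact .inr h
  · have hpath : (cons hxr nil).IsPath := by simpa using hxr.ne
    rw [ancestor_iff_mem_support hT hpath] at h
    simp only [support_cons, support_nil, List.mem_cons, List.not_mem_nil, or_false] at h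
    rcases h with rfl | rfl
    · exact .inr (ancestor_self s u)
    · exact .inl rfl

theorem reachAvoid_of_ancestor (hsb : T.Reachable s b) (hxa : Ancestor T s x a) (hax : a ≠ x)
    (hab : Ancestor T s a b) : ReachAvoid T x a b := by
  classical
  obtain ⟨p, hp⟩ := hsb.exists_isPath
  have ha := hab p hp
  refine reachAvoid_of_walk (p.dropUntil a ha) fun hx => ?_
  exact (p.take_spec ha ▸ hp).ne_of_mem_support_of_append (Ne.symm hax)
    (hxa _ (hp.takeUntil ha)) hx rfl

theorem exists_adj_reachAvoid (hT : T.IsAcyclic) (hsv : T.Reachable s v)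
    (hxv : Ancestor T s x v) (hne : x ≠ v) :
    ∃ r, T.Adj x r ∧ Ancestor T s r v ∧ ReachAvoid T x r v := by
  classical
  obtain ⟨p, hp⟩ := hsv.exists_isPath
  have hx := hxv p hp
  obtain ⟨r, hxr, q, hq⟩ := exists_eq_cons_of_ne hne (p.dropUntil x hx)
  have hpath := hp.dropUntil hx
  rw [hq, cons_isPath_iff] at hpath
  refine ⟨r, hxr, (ancestor_iff_mem_support hT hp).2 ?_, reachAvoid_of_walk q hpath.2⟩
  apply p.support_dropUntil_subset_support hx
  rw [hq, support_cons]
  exact List.mem_cons_of_mem _ q.start_mem_support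

theorem SimpleGraph.IsAcyclic.eq_of_adj_of_reachAvoid (hT : T.IsAcyclic) (hxr : T.Adj x r)
    (hxu : T.Adj x u) (h : ReachAvoid T x r u) : r = u := by
  classical
  obtain ⟨q, hq⟩ := h.exists_walk hxr.ne.symm
  have hpath : (cons hxr q.toPath.1).IsPath :=
    (cons_isPath_iff _ _).2 ⟨q.toPath.2, fun hx => hq (q.support_toPath_subset_support hx)⟩
  exact ((hT.eq_snd_of_adj_start hpath hxu (end_mem_support _)).trans (snd_cons _ _)).symm

theorem ancestor_induce_iff (hT : T.IsAcyclic) {I : Set V} {r v : I}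
    (hrv : (T.induce I).Reachable r v) (u : I) :
    Ancestor (T.induce I) r u v ↔ Ancestor T r u v := by
  obtain ⟨q, hq⟩ := hrv.exists_isPath
  have hq' := hq.map (f := (Embedding.induce I).toHom) Subtype.val_injective
  rw [ancestor_iff_mem_support (hT.induce I) hq]
  refine Iff.trans ?_ (ancestor_iff_mem_support hT hq').symm
  rw [Walk.support_map]
  exact (List.mem_map_of_injective Subtype.val_injective).symm

theorem reachAvoid_of_adj (hpre : T.Preconnected)
    (htremaux : ∀ a b : V, G.Adj a b → Ancestor T s a b ∨ Ancestor T s b a)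
    (hxa : Ancestor T s x a) (hxb : Ancestor T s x b) (hax : a ≠ x) (hbx : b ≠ x)
    (hab : G.Adj a b) : ReachAvoid T x a b := by
  rcases htremaux a b hab with h | h
  · exact reachAvoid_of_ancestor (hpre s b) hxa hax h
  · exact (reachAvoid_of_ancestor (hpre s a) hxb hbx h).symm

theorem exists_adj_reachAvoid_iff (hTG : T ≤ G) (hT : T.IsTree)
    (htremaux : ∀ a b : V, G.Adj a b → Ancestor T s a b ∨ Ancestor T s b a)
    (hax : a ≠ x) (hs : ¬ ReachAvoid G x s a) :
    ∃ r, T.Adj x r ∧ ∀ v, ReachAvoid G x a v ↔ ReachAvoid T x r v := by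
  have hpre := hT.connected.preconnected
  obtain ⟨r, hxr, -, hra⟩ :=
    exists_adj_reachAvoid hT.isAcyclic (hpre s a) (ancestor_of_reachAvoid hTG hs .refl) hax.symm
  refine ⟨r, hxr, fun v => ⟨fun hv => ?_, fun hv => (hra.mono hTG).symm.trans (hv.mono hTG)⟩⟩
  induction hv with
  | refl => exact hra
  | tail hab hbc ih =>
    exact ih.trans (reachAvoid_of_adj hpre htremaux (ancestor_of_reachAvoid hTG hs hab)
      (ancestor_of_reachAvoid hTG hs (hab.tail hbc)) hbc.1 hbc.2.1 hbc.2.2)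

theorem ancestor_of_adj_of_reachAvoid (hT : T.IsTree) (hxr : T.Adj x r)
    (hxv : Ancestor T s x v) (hxv' : x ≠ v) (hrv : ReachAvoid T x r v) : Ancestor T s r v := by
  obtain ⟨c, hxc, hcv, hcv'⟩ :=
    exists_adj_reachAvoid hT.isAcyclic (hT.connected.preconnected s v) hxv hxv'
  rwa [hT.isAcyclic.eq_of_adj_of_reachAvoid hxr hxc (hrv.trans hcv'.symm)]

theorem ancestor_iff_ancestor_of_adj (hT : T.IsTree) (hxr : T.Adj x r) (hxr' : Ancestor T s x r)
    (hrv : Ancestor T s r v) (hxu : Ancestor T s x u) (hux : u ≠ x) :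
    Ancestor T s u v ↔ Ancestor T r u v := by
  have hpre := hT.connected.preconnected
  rw [ancestor_iff_of_ancestor hT.isAcyclic (hpre s v) hrv, or_iff_right_of_imp]
  intro hur
  rcases hur.eq_or_ancestor_of_adj hT.isAcyclic (hpre s r) hxr hxr' with rfl | hux'
  · exact ancestor_root u v
  · exact absurd (hux'.antisymm (hpre s x) hxu) hux

end

theorem stmt10_general {V : Type*} (G T : SimpleGraph V)
    (hle : T ≤ G) (htree : T.IsTree) (s : V)
    (htremaux : ∀ a b : V, G.Adj a b → Ancestor T s a b ∨ Ancestor T s b a)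
    (f : V → ℕ)
    (hpost : ∀ u v : V, Ancestor T s u v → u ≠ v → f v < f u)
    (x : V) (I : Set V) (u0 : V) (hu0 : u0 ≠ x) (hu0s : ¬ ReachAvoid G x s u0)
    (hI : I = {v | ReachAvoid G x u0 v}) :
    ∃ r : V, ∃ hr : r ∈ I, T.Adj x r ∧ Ancestor T s x r ∧
      (T.induce I).IsTree ∧ T.induce I ≤ G.induce I ∧
      (∀ a b : I, (G.induce I).Adj a b →
        Ancestor (T.induce I) ⟨r, hr⟩ a b ∨ Ancestor (T.induce I) ⟨r, hr⟩ b a) ∧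
      (∀ u v : I, Ancestor (T.induce I) ⟨r, hr⟩ u v → u ≠ v →
        f v.1 < f u.1) := by
  subst hI
  set I : Set V := {v | ReachAvoid G x u0 v}
  have hxI (v : I) : Ancestor T s x v := ancestor_of_reachAvoid hle hu0s v.2
  obtain ⟨r, hxr, hIr⟩ := exists_adj_reachAvoid_iff hle htree htremaux hu0 hu0s
  have hrI : r ∈ I := (hIr r).2 .refl
  have hrv (v : I) : (T.induce I).Reachable ⟨r, hrI⟩ v :=
    ((hIr v).1 v.2).reachable_induce fun w hw => (hIr w).2 hw
  have hanc (a b : I) : Ancestor (T.induce I) ⟨r, hrI⟩ a b ↔ Ancestor T s a b := by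
    have hrb := ancestor_of_adj_of_reachAvoid htree hxr (hxI b) (b.2.ne hu0).symm ((hIr b).1 b.2)
    rw [ancestor_induce_iff htree.isAcyclic (hrv b),
      ancestor_iff_ancestor_of_adj htree hxr (hxI ⟨r, hrI⟩) hrb (hxI a) (a.2.ne hu0)]
  have hconnI : (T.induce I).Connected :=
    (connected_iff _).2 ⟨fun a b => (hrv a).symm.trans (hrv b), ⟨⟨r, hrI⟩⟩⟩
  refine ⟨r, hrI, hxr, hxI ⟨r, hrI⟩, ⟨hconnI, htree.isAcyclic.induce I⟩, fun _ _ h => hle h,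
    fun a b hab => ?_, fun u v huv hne => ?_⟩
  · simpa only [hanc] using htremaux a b hab
  · exact hpost u v ((hanc u v).1 huv) (Subtype.coe_ne_coe.2 hne)

/-- If `T` is a DFS (Trémaux) tree of `G` rooted at `s` with post-order finishing
times `f`, and `I` is a component of `G \ {x}` not containing `s`, then `T`
restricted to `I`, with the finishing times restricted to `I`, is a valid DFS tree
of the induced subgraph on `I`, rooted at the `T`-child `r` of `x` in `I`. -/
theorem stmt10 {V : Type*} [Fintype V] (G T : SimpleGraph V) (hconn : G.Connected)
    (hle : T ≤ G) (htree : T.IsTree) (s : V)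
    (htremaux : ∀ a b : V, G.Adj a b → Ancestor T s a b ∨ Ancestor T s b a)
    (f : V → ℕ) (hfinj : Function.Injective f)
    (hpost : ∀ u v : V, Ancestor T s u v → u ≠ v → f v < f u)
    (x : V) (I : Set V) (u0 : V) (hu0 : u0 ≠ x) (hu0s : ¬ ReachAvoid G x s u0)
    (hI : I = {v | ReachAvoid G x u0 v}) :
    ∃ r : V, ∃ hr : r ∈ I, T.Adj x r ∧ Ancestor T s x r ∧
      (T.induce I).IsTree ∧ T.induce I ≤ G.induce I ∧
      (∀ a b : I, (G.induce I).Adj a b →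
        Ancestor (T.induce I) ⟨r, hr⟩ a b ∨ Ancestor (T.induce I) ⟨r, hr⟩ b a) ∧
      (∀ u v : I, Ancestor (T.induce I) ⟨r, hr⟩ u v → u ≠ v →
        f v.1 < f u.1) :=
  stmt10_general G T hle htree s htremaux f hpost x I u0 hu0 hu0s hI
end

section
/- Let V be a finite face-connected set of cells in Z^d, d ≥ 2, with x ∈ B_out(V) articulate and y ∈ V face-adjacent to x with the component of y in V \ {x} disjoint from B_out(V). Then x has at most one face on the outer boundary of V, namely the face opposite the face shared with y, and x has exactly this one face on the outer boundary. -/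
/-- A face of `v` is encoded by the cell across it. -/
def outerFaces (d : ℕ) (V : Set (Fin d → ℤ)) (v : Fin d → ℤ) : Set (Fin d → ℤ) :=
  {c | c ∉ V ∧ (gridGraph d).Adj v c ∧ Set.Infinite {b | ReachIn d Vᶜ c b}}

variable {d : ℕ}

theorem gridGraph_adj_add_right_iff {a b : Fin d → ℤ} (t : Fin d → ℤ) :
    (gridGraph d).Adj (a + t) (b + t) ↔ (gridGraph d).Adj a b := by
  show (∑ i, |(a i + t i) - (b i + t i)|) = 1 ↔ (∑ i, |a i - b i|) = 1
  simp only [add_sub_add_right_eq_sub]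

theorem ReachIn.infinite_of_adj {S : Set (Fin d → ℤ)} {z c : Fin d → ℤ} (hz : z ∈ S)
    (hc : c ∈ S) (hzc : (gridGraph d).Adj z c) (hinf : Set.Infinite {b | ReachIn d S c b}) :
    Set.Infinite {b | ReachIn d S z b} :=
  hinf.mono fun _ hb => (Relation.ReflTransGen.single ⟨hz, hc, hzc⟩).trans hb

theorem outerFaces_subset_opposite {V : Set (Fin d → ℤ)} {x y : Fin d → ℤ} (hy : y ∈ V)
    (hadj : (gridGraph d).Adj x y) (hdisj : ∀ b, ReachIn d (V \ {x}) y b → b ∉ Bout d V) :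
    outerFaces d V x ⊆ {fun i => 2 * x i - y i} := by
  rintro c ⟨hcV, hxc, hinf⟩
  set z := c + (y - x) with hz_def
  have hyz : (gridGraph d).Adj y z := by
    simpa using (gridGraph_adj_add_right_iff (y - x)).2 hxc
  have hzc : (gridGraph d).Adj z c := by
    have hz' : y + (c - x) = z := by rw [hz_def]; abel
    simpa [hz'] using ((gridGraph_adj_add_right_iff (c - x)).2 hadj).symm
  by_cases hzx : z = x
  · funext i
    have := congrFun hzx i
    simp only [hz_def, Pi.add_apply, Pi.sub_apply] at this
    omega
  have hyx : y ≠ x := fun h => (gridGraph d).loopless.irrefl x (h ▸ hadj)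
  by_cases hzV : z ∈ V
  · exact absurd ⟨hzV, c, hcV, hzc, hinf⟩
      (hdisj z (Relation.ReflTransGen.single ⟨⟨hy, hyx⟩, ⟨hzV, hzx⟩, hyz⟩))
  · exact absurd ⟨hy, z, hzV, hyz, ReachIn.infinite_of_adj hzV hcV hzc hinf⟩
      (hdisj y Relation.ReflTransGen.refl)

theorem stmt16_general (d : ℕ) (V : Set (Fin d → ℤ))
    (x : Fin d → ℤ) (hx : x ∈ Bout d V)
    (y : Fin d → ℤ) (hy : y ∈ V) (hadj : (gridGraph d).Adj x y)
    (hdisj : ∀ b, ReachIn d (V \ {x}) y b → b ∉ Bout d V) :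
    -- the outer-boundary faces of `x` are exactly the one opposite `y`
    {c | c ∉ V ∧ (gridGraph d).Adj x c ∧ Set.Infinite {b | ReachIn d Vᶜ c b}} =
      {fun i => 2 * x i - y i} := by
  obtain ⟨-, hnonempty⟩ := hx
  exact (Set.Nonempty.subset_singleton_iff hnonempty).1 (outerFaces_subset_opposite hy hadj hdisj)

theorem stmt16 (d : ℕ) (hd : 2 ≤ d) (V : Set (Fin d → ℤ)) (hfin : V.Finite)
    (hconn : IsConn d V) (x : Fin d → ℤ) (hx : x ∈ Bout d V)
    (hart : ¬ IsConn d (V \ {x}))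
    (y : Fin d → ℤ) (hy : y ∈ V) (hadj : (gridGraph d).Adj x y)
    (hdisj : ∀ b, ReachIn d (V \ {x}) y b → b ∉ Bout d V) :
    -- the outer-boundary faces of `x` are exactly the one opposite `y`
    {c | c ∉ V ∧ (gridGraph d).Adj x c ∧ Set.Infinite {b | ReachIn d Vᶜ c b}} =
      {fun i => 2 * x i - y i} :=
  stmt16_general d V x hx y hy hadj hdisj
end
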